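/- Let A < B, let k = 2m−1 be odd and let Ψ₀,…,Ψ_{2m−2} : [A,B] → ℝ be a Chebyshev system. If σ₁ and σ₂ are finitely supported nonnegative measures on [A,B], each supported on exactly m points including the endpoint A but not B, and ∫_A^B Ψ_i dσ₁ = ∫_A^B Ψ_i dσ₂ for all i = 0,…,2m−2, then σ₁ = σ₂. (Uniqueness of the lower principal representation for odd k.) -/

import Mathlib

open MeasureTheory Set

/-- A family of functions `Ψ₀, …, Ψ_{k-1}` is a Chebyshev system on `[A,B]` if for all
points `A ≤ x₀ < x₁ < ⋯ < x_{k-1} ≤ B` the matrix `(Ψ i (x j))` has positive determinant. -/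
def IsChebyshevSystem (A B : ℝ) {k : ℕ} (Ψ : Fin k → ℝ → ℝ) : Prop :=
  ∀ x : Fin k → ℝ, StrictMono x → (∀ j, x j ∈ Set.Icc A B) →
    0 < (Matrix.of fun i j : Fin k => Ψ i (x j)).det

/-- `σ` is a finitely supported nonnegative measure on `[A,B]`, supported exactly on the
finite set `s ⊆ [A,B]`, i.e. `σ = ∑_{x ∈ s} a_x δ_x` with positive finite weights. -/
def IsAtomicMeasureOn (A B : ℝ) (σ : Measure ℝ) (s : Finset ℝ) : Prop :=
  ↑s ⊆ Set.Icc A B ∧ (∀ x ∈ s, 0 < σ {x} ∧ σ {x} < ⊤) ∧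
    σ = ∑ x ∈ s, σ {x} • Measure.dirac x

/-!
Both weight vectors live on `s₁ ∪ s₂`, which has at most `2m - 1` points because the two
supports share `A`. Completed to exactly `2m - 1` points of `[A, B]`, these points give a
nonsingular Chebyshev matrix, so the only weights annihilating every `Ψ i` are zero; equal
moments say that the difference of the two weight vectors annihilates every `Ψ i`.
-/

theorem Set.Infinite.exists_finset_superset_card_eq {α : Type*} [DecidableEq α] {S : Set α}
    (hS : S.Infinite) {u : Finset α} (huS : ↑u ⊆ S) {k : ℕ} (hk : u.card ≤ k) :
    ∃ t : Finset α, u ⊆ t ∧ ↑t ⊆ S ∧ t.card = k := by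
  obtain ⟨v, hvS, hv⟩ := (hS.sdiff u.finite_toSet).exists_subset_card_eq (k - u.card)
  have hdisj : Disjoint u v :=
    Finset.disjoint_left.2 fun x hxu hxv => (hvS hxv).2 hxu
  refine ⟨u ∪ v, Finset.subset_union_left, ?_, ?_⟩
  · rw [Finset.coe_union]
    exact union_subset huS (hvS.trans sdiff_subset)
  · rw [Finset.card_union_of_disjoint hdisj, hv]
    omega

namespace IsAtomicMeasureOn

variable {A B : ℝ} {σ : Measure ℝ} {s : Finset ℝ}

theorem measure_singleton_of_notMem (h : IsAtomicMeasureOn A B σ s) {x : ℝ} (hx : x ∉ s) :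
    σ {x} = 0 := by
  rw [h.2.2, Measure.finsetSum_apply]
  refine Finset.sum_eq_zero fun y hy => ?_
  have hxy : y ∉ ({x} : Set ℝ) := fun hyx => hx (mem_singleton_iff.1 hyx ▸ hy)
  rw [Measure.smul_apply, Measure.dirac_apply, indicator_of_notMem hxy, smul_zero]

theorem measure_singleton_ne_top (h : IsAtomicMeasureOn A B σ s) (x : ℝ) : σ {x} ≠ ⊤ := by
  by_cases hx : x ∈ s
  · exact (h.2.1 x hx).2.ne
  · simp [h.measure_singleton_of_notMem hx]

theorem eq_sum_dirac_of_subset (h : IsAtomicMeasureOn A B σ s) {t : Finset ℝ} (hst : s ⊆ t) :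
    σ = ∑ x ∈ t, σ {x} • Measure.dirac x := by
  refine h.2.2.trans (Finset.sum_subset hst fun x _ hx => ?_)
  rw [h.measure_singleton_of_notMem hx, zero_smul]

theorem integral_eq_sum_of_subset (h : IsAtomicMeasureOn A B σ s) {t : Finset ℝ} (hst : s ⊆ t)
    (f : ℝ → ℝ) : ∫ x, f x ∂σ = ∑ x ∈ t, (σ {x}).toReal * f x := by
  conv_lhs => rw [h.eq_sum_dirac_of_subset hst]
  rw [integral_finsetSum_measure fun x _ =>
    (integrable_dirac enorm_lt_top).smul_measure (h.measure_singleton_ne_top x)]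
  simp only [integral_smul_measure, integral_dirac, smul_eq_mul]

theorem ext_of_measure_singleton_eq {σ' : Measure ℝ} {s' : Finset ℝ}
    (h : IsAtomicMeasureOn A B σ s) (h' : IsAtomicMeasureOn A B σ' s')
    (heq : ∀ x ∈ s ∪ s', σ {x} = σ' {x}) : σ = σ' := by
  classical
  rw [h.eq_sum_dirac_of_subset Finset.subset_union_left,
    h'.eq_sum_dirac_of_subset Finset.subset_union_right]
  exact Finset.sum_congr rfl fun x hx => by rw [heq x hx]

end IsAtomicMeasureOn

namespace IsChebyshevSystem

variable {A B : ℝ} {k : ℕ} {Ψ : Fin k → ℝ → ℝ}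

theorem eq_zero_of_forall_sum_mul_eq_zero_of_card_eq (hΨ : IsChebyshevSystem A B Ψ)
    {t : Finset ℝ} (htI : ↑t ⊆ Icc A B) (ht : t.card = k) {c : ℝ → ℝ}
    (hc : ∀ i, ∑ y ∈ t, c y * Ψ i y = 0) : ∀ y ∈ t, c y = 0 := by
  set x := t.orderEmbOfFin ht
  have hsum (g : ℝ → ℝ) : ∑ j, g (x j) = ∑ y ∈ t, g y := by
    rw [← t.image_orderEmbOfFin_univ ht, Finset.sum_image fun i _ j _ hij => x.injective hij]
  have hmulVec : (Matrix.of fun i j => Ψ i (x j)).mulVec (fun j => c (x j)) = 0 := by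
    funext i
    simp only [Matrix.mulVec, dotProduct, Matrix.of_apply, Pi.zero_apply,
      hsum fun y => Ψ i y * c y]
    simpa only [mul_comm] using hc i
  have hdet := hΨ x x.strictMono fun j => htI (t.orderEmbOfFin_mem ht j)
  have hzero := Matrix.eq_zero_of_mulVec_eq_zero hdet.ne' hmulVec
  intro y hy
  obtain ⟨j, rfl⟩ : y ∈ range x := by rwa [t.range_orderEmbOfFin ht]
  exact congrFun hzero j

theorem eq_zero_of_forall_sum_mul_eq_zero (hΨ : IsChebyshevSystem A B Ψ) (hAB : A < B)
    {u : Finset ℝ} (huI : ↑u ⊆ Icc A B) (hu : u.card ≤ k) {c : ℝ → ℝ}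
    (hc : ∀ i, ∑ y ∈ u, c y * Ψ i y = 0) : ∀ y ∈ u, c y = 0 := by
  classical
  obtain ⟨t, hut, htI, ht⟩ := (Icc_infinite hAB).exists_finset_superset_card_eq huI hu
  have hct : ∀ i, ∑ y ∈ t, (if y ∈ u then c y else 0) * Ψ i y = 0 := fun i => by
    simpa [ite_mul, Finset.sum_ite_mem, Finset.inter_eq_right.2 hut] using hc i
  intro y hy
  simpa [hy] using hΨ.eq_zero_of_forall_sum_mul_eq_zero_of_card_eq htI ht hct y (hut hy)

end IsChebyshevSystem

theorem lower_principal_representation_unique_odd_general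
    {m : ℕ} (A B : ℝ) (hAB : A < B) (Ψ : Fin (2 * m - 1) → ℝ → ℝ)
    (hCheb : IsChebyshevSystem A B Ψ)
    (σ₁ σ₂ : Measure ℝ) (s₁ s₂ : Finset ℝ)
    (h₁ : IsAtomicMeasureOn A B σ₁ s₁) (h₂ : IsAtomicMeasureOn A B σ₂ s₂)
    (hcard₁ : s₁.card = m) (hcard₂ : s₂.card = m)
    (hA₁ : A ∈ s₁) (hA₂ : A ∈ s₂)
    (hmom : ∀ i, ∫ x, Ψ i x ∂σ₁ = ∫ x, Ψ i x ∂σ₂) :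
    σ₁ = σ₂ := by
  classical
  have hcard : (s₁ ∪ s₂).card ≤ 2 * m - 1 := by
    have hinter : 0 < (s₁ ∩ s₂).card := Finset.card_pos.2 ⟨A, Finset.mem_inter.2 ⟨hA₁, hA₂⟩⟩
    have := Finset.card_union_add_card_inter s₁ s₂
    omega
  have hIcc : ↑(s₁ ∪ s₂) ⊆ Icc A B := by
    rw [Finset.coe_union]
    exact union_subset h₁.1 h₂.1
  have hsum (i : Fin (2 * m - 1)) :
      ∑ y ∈ s₁ ∪ s₂, ((σ₁ {y}).toReal - (σ₂ {y}).toReal) * Ψ i y = 0 := by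
    rw [← sub_eq_zero.2 (hmom i), h₁.integral_eq_sum_of_subset Finset.subset_union_left,
      h₂.integral_eq_sum_of_subset Finset.subset_union_right, ← Finset.sum_sub_distrib]
    simp only [sub_mul]
  refine h₁.ext_of_measure_singleton_eq h₂ fun y hy => ?_
  rw [← ENNReal.toReal_eq_toReal_iff' (h₁.measure_singleton_ne_top y)
    (h₂.measure_singleton_ne_top y), ← sub_eq_zero]
  exact hCheb.eq_zero_of_forall_sum_mul_eq_zero hAB hIcc hcard hsum y hy

/-- Uniqueness of the lower principal representation for odd `k = 2m - 1`: two finitely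
supported nonnegative measures on `[A,B]`, each supported on exactly `m` points
including `A` but not `B`, with equal moments w.r.t. a Chebyshev system
`Ψ₀,…,Ψ_{2m-2}`, coincide. -/
theorem lower_principal_representation_unique_odd
    {m : ℕ} (hm : 1 ≤ m) (A B : ℝ) (hAB : A < B) (Ψ : Fin (2 * m - 1) → ℝ → ℝ)
    (hcont : ∀ i, ContinuousOn (Ψ i) (Set.Icc A B))
    (hCheb : IsChebyshevSystem A B Ψ)
    (σ₁ σ₂ : Measure ℝ) (s₁ s₂ : Finset ℝ)
    (h₁ : IsAtomicMeasureOn A B σ₁ s₁) (h₂ : IsAtomicMeasureOn A B σ₂ s₂)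
    (hcard₁ : s₁.card = m) (hcard₂ : s₂.card = m)
    (hA₁ : A ∈ s₁) (hB₁ : B ∉ s₁) (hA₂ : A ∈ s₂) (hB₂ : B ∉ s₂)
    (hmom : ∀ i, ∫ x, Ψ i x ∂σ₁ = ∫ x, Ψ i x ∂σ₂) :
    σ₁ = σ₂ :=
  lower_principal_representation_unique_odd_general A B hAB Ψ hCheb σ₁ σ₂ s₁ s₂ h₁ h₂ hcard₁ hcard₂
    hA₁ hA₂ hmom
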